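/- arXiv:math/0204349 — 6 statements merged into one kernel-verified Lean document; each statement's English description precedes it below -/
import Mathlib

section
/- Let A be a skew-symmetric operator on a finite-dimensional real inner product space. Then the operator |A| := √(-A²) is well-defined (−A² is positive semidefinite symmetric), and A = |A| ∘ J for a partial isometry J with the same kernel as A, where J restricted to (ker A)^⊥ is an orthogonal complex structure, i.e. J² = −Id and J is an isometry on (ker A)^⊥. -/
open scoped RealInnerProductSpace

section Aux

variable {V : Type*} [NormedAddCommGroup V] [InnerProductSpace ℝ V] [FiniteDimensional ℝ V]

/-- If `S` is symmetric positive and `S² w = c² w` with `c ≥ 0`, then `S w = c w`. -/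
lemma skewPolar_eig_aux {S : V →ₗ[ℝ] V} (hsym : ∀ x y : V, ⟪S x, y⟫ = ⟪x, S y⟫)
    (hpos : ∀ x : V, 0 ≤ ⟪S x, x⟫) {c : ℝ} (hc : 0 ≤ c) {w : V}
    (hw : S (S w) = (c ^ 2) • w) : S w = c • w := by
  rcases eq_or_lt_of_le hc with h0 | hcpos
  · -- c = 0
    have hSSw : S (S w) = 0 := by rw [hw, ← h0]; simp
    have h1 : ⟪S w, S w⟫ = 0 := by
      rw [← hsym (S w) w, hSSw, inner_zero_left]
    have : S w = 0 := by rwa [inner_self_eq_zero] at h1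
    rw [this, ← h0]; simp
  · set u := S w - c • w with hu
    have h1 : S u + c • u = 0 := by
      simp only [hu, map_sub, map_smul, smul_sub, smul_smul]
      rw [hw]
      module
    have h2 : ⟪S u, u⟫ + c * ⟪u, u⟫ = 0 := by
      have : ⟪S u + c • u, u⟫ = 0 := by rw [h1, inner_zero_left]
      rwa [inner_add_left, real_inner_smul_left] at this
    have h3 : ⟪u, u⟫ = 0 := by nlinarith [hpos u, real_inner_self_nonneg (x := u)]
    have h4 : u = 0 := by rwa [inner_self_eq_zero] at h3
    exact sub_eq_zero.mp h4

/-- If `S` is symmetric positive and `S ∘ S = -(A ∘ A)`, then `S` commutes with `A`. -/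
lemma skewPolar_comm {S A : V →ₗ[ℝ] V} (hsym : ∀ x y : V, ⟪S x, y⟫ = ⟪x, S y⟫)
    (hpos : ∀ x : V, 0 ≤ ⟪S x, x⟫) (hSS : S ∘ₗ S = -(A ∘ₗ A)) :
    S ∘ₗ A = A ∘ₗ S := by
  classical
  have hSymm : LinearMap.IsSymmetric S := fun x y => hsym x y
  have hn : Module.finrank ℝ V = Module.finrank ℝ V := rfl
  set b := hSymm.eigenvectorBasis hn with hb
  set ν := hSymm.eigenvalues hn with hν
  have happ : ∀ i, S (b i) = ν i • b i := fun i =>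
    hSymm.apply_eigenvectorBasis hn i
  have hνpos : ∀ i, 0 ≤ ν i := by
    intro i
    have := hpos (b i)
    rw [happ i, real_inner_smul_left, real_inner_self_eq_norm_sq, b.orthonormal.1 i] at this
    simpa using this
  have hSSapp : ∀ x, S (S x) = -(A (A x)) := by
    intro x
    have := LinearMap.congr_fun hSS x
    simpa using this
  apply b.toBasis.ext
  intro i
  simp only [LinearMap.comp_apply, OrthonormalBasis.coe_toBasis]
  have key : S (S (A (b i))) = (ν i ^ 2) • (A (b i)) := by
    have hx : A (A (b i)) = -(S (S (b i))) := by rw [hSSapp (b i), neg_neg]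
    rw [hSSapp (A (b i)), hx, happ i, map_smul, happ i]
    simp [smul_smul, sq]
  have := skewPolar_eig_aux hsym hpos (hνpos i) key
  rw [this, happ i, map_smul]

end Aux

/-- Polar decomposition of a skew-symmetric operator `A` on a finite-dimensional
real inner product space: `-A²` is positive semidefinite symmetric, it has a
unique positive semidefinite symmetric square root `|A|`, and `A = |A| ∘ J`
where `J` is a partial isometry with `ker J = ker A` which restricts to an
orthogonal complex structure on `(ker A)ᗮ`. -/
theorem skew_polar_decomposition
    (V : Type*) [NormedAddCommGroup V] [InnerProductSpace ℝ V]
    [FiniteDimensional ℝ V]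
    (A : V →ₗ[ℝ] V) (hskew : ∀ x y : V, ⟪A x, y⟫ = - ⟪x, A y⟫) :
    -- `-A²` is symmetric and positive semidefinite
    (∀ x y : V, ⟪(-(A ∘ₗ A)) x, y⟫ = ⟪x, (-(A ∘ₗ A)) y⟫) ∧
    (∀ x : V, 0 ≤ ⟪(-(A ∘ₗ A)) x, x⟫) ∧
    -- there is a unique positive semidefinite symmetric square root `|A|`
    (∃! S : V →ₗ[ℝ] V,
      (∀ x y : V, ⟪S x, y⟫ = ⟪x, S y⟫) ∧ (∀ x : V, 0 ≤ ⟪S x, x⟫) ∧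
        S ∘ₗ S = -(A ∘ₗ A)) ∧
    -- for this square root we have the polar decomposition `A = |A| ∘ J`
    (∀ S : V →ₗ[ℝ] V,
      ((∀ x y : V, ⟪S x, y⟫ = ⟪x, S y⟫) ∧ (∀ x : V, 0 ≤ ⟪S x, x⟫) ∧
        S ∘ₗ S = -(A ∘ₗ A)) →
      ∃ J : V →ₗ[ℝ] V,
        A = S ∘ₗ J ∧
        LinearMap.ker J = LinearMap.ker A ∧
        (∀ x ∈ (LinearMap.ker A)ᗮ, ‖J x‖ = ‖x‖) ∧
        (∀ x ∈ (LinearMap.ker A)ᗮ, J x ∈ (LinearMap.ker A)ᗮ) ∧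
        (∀ x ∈ (LinearMap.ker A)ᗮ, J (J x) = -x)) := by
  classical
  have hTsym : ∀ x y : V, ⟪(-(A ∘ₗ A)) x, y⟫ = ⟪x, (-(A ∘ₗ A)) y⟫ := by
    intro x y
    simp only [LinearMap.neg_apply, LinearMap.comp_apply, inner_neg_left, inner_neg_right]
    rw [hskew (A x) y, hskew x (A y)]
    ring
  have hTpos : ∀ x : V, 0 ≤ ⟪(-(A ∘ₗ A)) x, x⟫ := by
    intro x
    simp only [LinearMap.neg_apply, LinearMap.comp_apply, inner_neg_left]
    rw [hskew (A x) x]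
    simpa using real_inner_self_nonneg (x := A x)
  refine ⟨hTsym, hTpos, ?_, ?_⟩
  · -- existence and uniqueness of the square root
    have hTSymm : LinearMap.IsSymmetric (-(A ∘ₗ A)) := fun x y => hTsym x y
    have hn : Module.finrank ℝ V = Module.finrank ℝ V := rfl
    set b := hTSymm.eigenvectorBasis hn with hb
    set μ := hTSymm.eigenvalues hn with hμ
    have happ : ∀ i, (-(A ∘ₗ A)) (b i) = μ i • b i := fun i => by
      simpa using hTSymm.apply_eigenvectorBasis hn i
    have hμpos : ∀ i, 0 ≤ μ i := by
      intro i
      have := hTpos (b i)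
      rw [happ i, real_inner_smul_left, real_inner_self_eq_norm_sq, b.orthonormal.1 i] at this
      simpa using this
    set S : V →ₗ[ℝ] V := b.toBasis.constr ℝ (fun i => Real.sqrt (μ i) • b i) with hS
    have hSb : ∀ i, S (b i) = Real.sqrt (μ i) • b i := by
      intro i
      have := b.toBasis.constr_basis ℝ (fun i => Real.sqrt (μ i) • b i) i
      rwa [OrthonormalBasis.coe_toBasis] at this
    have hinner : ∀ x y : V, ⟪S x, y⟫ = ∑ i, Real.sqrt (μ i) * (b.repr x i * b.repr y i) := by
      intro x y
      conv_lhs => rw [← b.sum_repr x]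
      rw [map_sum, sum_inner]
      congr 1
      ext i
      rw [map_smul, hSb i, real_inner_smul_left, real_inner_smul_left,
        ← b.repr_apply_apply y i]
      ring
    have hSsym : ∀ x y : V, ⟪S x, y⟫ = ⟪x, S y⟫ := by
      intro x y
      rw [hinner x y, real_inner_comm (S y) x, hinner y x]
      congr 1; ext i; ring
    have hSpos : ∀ x : V, 0 ≤ ⟪S x, x⟫ := by
      intro x
      rw [hinner x x]
      apply Finset.sum_nonneg
      intro i _
      have := Real.sqrt_nonneg (μ i)
      nlinarith [sq_nonneg (b.repr x i)]
    have hSsq : S ∘ₗ S = -(A ∘ₗ A) := by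
      apply b.toBasis.ext
      intro i
      simp only [LinearMap.comp_apply, OrthonormalBasis.coe_toBasis]
      rw [hSb i, map_smul, hSb i, smul_smul, Real.mul_self_sqrt (hμpos i), ← happ i]
    refine ⟨S, ⟨hSsym, hSpos, hSsq⟩, ?_⟩
    rintro S' ⟨hS'sym, hS'pos, hS'sq⟩
    have hSSymm : LinearMap.IsSymmetric S := fun x y => hSsym x y
    set c := hSSymm.eigenvectorBasis hn with hc
    set ν := hSSymm.eigenvalues hn with hν
    have hcapp : ∀ i, S (c i) = ν i • c i := fun i =>
      hSSymm.apply_eigenvectorBasis hn i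
    have hνpos : ∀ i, 0 ≤ ν i := by
      intro i
      have := hSpos (c i)
      rw [hcapp i, real_inner_smul_left, real_inner_self_eq_norm_sq, c.orthonormal.1 i] at this
      simpa using this
    apply c.toBasis.ext
    intro i
    simp only [OrthonormalBasis.coe_toBasis]
    have hkey : S' (S' (c i)) = (ν i ^ 2) • c i := by
      have h1 : S' (S' (c i)) = (-(A ∘ₗ A)) (c i) := LinearMap.congr_fun hS'sq (c i)
      have h2 : S (S (c i)) = (-(A ∘ₗ A)) (c i) := LinearMap.congr_fun hSsq (c i)
      rw [h1, ← h2, hcapp i, map_smul, hcapp i, smul_smul, sq]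
    rw [skewPolar_eig_aux hS'sym hS'pos (hνpos i) hkey, hcapp i]
  · -- polar decomposition for any such square root S
    rintro S ⟨hSsym, hSpos, hSsq⟩
    have hSSapp : ∀ x, S (S x) = -(A (A x)) := by
      intro x
      have := LinearMap.congr_fun hSsq x
      simpa using this
    have hcomm : S ∘ₗ A = A ∘ₗ S := skewPolar_comm hSsym hSpos hSsq
    have hcomm' : ∀ x, S (A x) = A (S x) := fun x => LinearMap.congr_fun hcomm x
    have hkerAS : ∀ x, S x = 0 ↔ A x = 0 := by
      intro x
      have hnorm : ⟪S x, S x⟫ = ⟪A x, A x⟫ := by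
        rw [hSsym x (S x), hSSapp x, inner_neg_right, real_inner_comm (A (A x)) x,
          hskew (A x) x, neg_neg]
      constructor
      · intro h
        have h2 : ⟪A x, A x⟫ = 0 := by rw [← hnorm, h, inner_zero_left]
        rwa [inner_self_eq_zero] at h2
      · intro h
        have h2 : ⟪S x, S x⟫ = 0 := by rw [hnorm, h, inner_zero_left]
        rwa [inner_self_eq_zero] at h2
    set W := (LinearMap.ker A)ᗮ with hW
    have hAW : ∀ x, A x ∈ W := by
      intro x
      rw [hW, Submodule.mem_orthogonal]
      intro y hy
      have hAy : A y = 0 := hy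
      rw [real_inner_comm, hskew x y, hAy, inner_zero_right, neg_zero]
    have hSW : ∀ x, S x ∈ W := by
      intro x
      rw [hW, Submodule.mem_orthogonal]
      intro y hy
      have hSy : S y = 0 := (hkerAS y).mpr hy
      rw [real_inner_comm, hSsym x y, hSy, inner_zero_right]
    have hWinj : ∀ u v : V, u ∈ W → v ∈ W → S u = S v → u = v := by
      intro u v hu hv h
      have h1 : S (u - v) = 0 := by rw [map_sub, h, sub_self]
      have h2 : A (u - v) = 0 := (hkerAS _).mp h1
      have h3 : (u - v) ∈ W := Submodule.sub_mem _ hu hv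
      rw [hW, Submodule.mem_orthogonal] at h3
      have h4 : ⟪u - v, u - v⟫ = 0 := h3 (u - v) (LinearMap.mem_ker.mpr h2)
      rw [inner_self_eq_zero, sub_eq_zero] at h4
      exact h4
    set S' : W →ₗ[ℝ] W := S.restrict (fun x _ => hSW x) with hS'
    have hS'coe : ∀ w : W, (S' w : V) = S (w : V) := fun w => rfl
    have hS'inj : Function.Injective S' := by
      intro u v huv
      have : S (u : V) = S (v : V) := by
        rw [← hS'coe u, ← hS'coe v, huv]
      exact Subtype.ext (hWinj u v u.2 v.2 this)
    have hS'surj : Function.Surjective S' := LinearMap.injective_iff_surjective.mp hS'inj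
    set e : W ≃ₗ[ℝ] W := LinearEquiv.ofBijective S' ⟨hS'inj, hS'surj⟩ with he
    have hecoe : ∀ w : W, ((e w : W) : V) = S (w : V) := fun w => rfl
    set A' : V →ₗ[ℝ] W := A.codRestrict W hAW with hA'
    have hA'coe : ∀ x : V, ((A' x : W) : V) = A x := fun x => rfl
    set J : V →ₗ[ℝ] V := W.subtype ∘ₗ (e.symm : W →ₗ[ℝ] W) ∘ₗ A' with hJ
    have hJcoe : ∀ x : V, J x = ((e.symm (A' x) : W) : V) := fun x => rfl
    have hJmem : ∀ x : V, J x ∈ W := fun x => (e.symm (A' x)).2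
    -- A = S ∘ J
    have hSJ : ∀ x : V, S (J x) = A x := by
      intro x
      rw [hJcoe, ← hecoe, e.apply_symm_apply, hA'coe]
    have hAeq : A = S ∘ₗ J := by
      ext x
      exact (hSJ x).symm
    -- kernels
    have hker : LinearMap.ker J = LinearMap.ker A := by
      ext x
      simp only [LinearMap.mem_ker]
      constructor
      · intro h
        have h1 : S (J x) = 0 := by rw [h, map_zero]
        rw [hSJ x] at h1
        exact h1
      · intro h
        have h1 : A' x = 0 := Subtype.ext (by rw [hA'coe, h]; rfl)
        rw [hJcoe, h1, map_zero]
        rfl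
    -- J (S z) = A z
    have hJS : ∀ z : V, z ∈ W → J (S z) = A z := by
      intro z hz
      have h1 : A' (S z) = e ⟨A z, hAW z⟩ := by
        apply Subtype.ext
        rw [hA'coe, hecoe]
        exact (hcomm' z).symm
      rw [hJcoe, h1, e.symm_apply_apply]
    -- A (J x) = -(S x)
    have hAJ : ∀ x : V, A (J x) = -(S x) := by
      intro x
      apply hWinj _ _ (hAW _) (Submodule.neg_mem _ (hSW x))
      rw [hcomm' (J x), hSJ x, map_neg, hSSapp x, neg_neg]
    have hJJ : ∀ x, x ∈ W → J (J x) = -x := by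
      intro x hx
      have h1 : A' (J x) = e (-⟨x, hx⟩) := by
        apply Subtype.ext
        rw [hA'coe, hecoe, hAJ x]
        simp
      rw [hJcoe, h1, e.symm_apply_apply]
      simp
    have hsurjW : ∀ y, y ∈ W → ∃ z, z ∈ W ∧ S z = y := by
      intro y hy
      obtain ⟨w, hw⟩ := hS'surj ⟨y, hy⟩
      exact ⟨w, w.2, by rw [← hS'coe w, hw]⟩
    have hJskew : ∀ x : V, ∀ y ∈ W, ⟪J x, y⟫ = -⟪x, J y⟫ := by
      intro x y hy
      obtain ⟨z, hz, rfl⟩ := hsurjW y hy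
      rw [← hSsym (J x) z, hSJ x, hskew x z, hJS z hz]
    have hiso : ∀ x, x ∈ W → ‖J x‖ = ‖x‖ := by
      intro x hx
      have h1 : ⟪J x, J x⟫ = ⟪x, x⟫ := by
        rw [hJskew x (J x) (hJmem x), hJJ x hx, inner_neg_right, neg_neg]
      rw [real_inner_self_eq_norm_mul_norm, real_inner_self_eq_norm_mul_norm] at h1
      rw [← Real.sqrt_mul_self (norm_nonneg (J x)), h1,
        Real.sqrt_mul_self (norm_nonneg x)]
    exact ⟨J, hAeq, hker, hiso, fun x _ => hJmem x, hJJ⟩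
end

section
/- With V, J, g, ω as above and W a 2n-dimensional subspace with equal Kähler angle θ, define Φ : W → W^⊥ by Φ(X) = (JX)^⊥ and Ξ : W^⊥ → W by Ξ(U) = (JU)^⊤. Then −Ξ ∘ Φ = sin²θ · Id_W and −Φ ∘ Ξ = sin²θ · Id_{W^⊥}. -/
open scoped RealInnerProductSpace

/-- For a `2n`-dimensional subspace `W` with equal Kähler angle `θ` of a
`4n`-dimensional Hermitian space, with `Φ(X) = (JX)^⊥` and `Ξ(U) = (JU)^⊤`,
one has `−Ξ ∘ Φ = sin²θ · Id_W` and `−Φ ∘ Ξ = sin²θ · Id_{Wᗮ}`. -/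
theorem equal_kahler_angles_Xi_Phi
    (n : ℕ) (V : Type*) [NormedAddCommGroup V] [InnerProductSpace ℝ V]
    [FiniteDimensional ℝ V] (hdim : Module.finrank ℝ V = 4 * n)
    (J : V →ₗ[ℝ] V) (hJ2 : J ∘ₗ J = -LinearMap.id)
    (hJorth : ∀ x y : V, ⟪J x, J y⟫ = ⟪x, y⟫)
    (W : Submodule ℝ V) (hW : Module.finrank ℝ W = 2 * n)
    (θ : ℝ)
    (A : W →ₗ[ℝ] W) (hA : ∀ x y : W, ⟪A x, y⟫ = ⟪J (x : V), (y : V)⟫)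
    (hEq : A ∘ₗ A = -(Real.cos θ ^ 2) • LinearMap.id)
    -- `Φ : W → Wᗮ`, `Φ(X) = (JX)^⊥` and `Ξ : Wᗮ → W`, `Ξ(U) = (JU)^⊤`
    (Φ : W → V) (hΦ : ∀ x : W, Φ x = J (x : V) - (Submodule.orthogonalProjection W (J (x : V)) : V))
    (Ξ : V → V) (hΞ : ∀ u : V, Ξ u = (Submodule.orthogonalProjection W (J u) : V)) :
    (∀ x : W, -(Ξ (Φ x)) = Real.sin θ ^ 2 • (x : V)) ∧
    (∀ u ∈ Wᗮ, -(J (Ξ u) - (Submodule.orthogonalProjection W (J (Ξ u)) : V))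
        = Real.sin θ ^ 2 • u) := by
  have hJJ : ∀ v : V, J (J v) = -v := by
    intro v
    have := congrArg (fun f => f v) hJ2
    simpa using this
  -- projection of J x for x ∈ W is A x
  have hproj : ∀ x : W, (Submodule.orthogonalProjection W (J (x : V)) : V) = (A x : V) := by
    intro x
    refine Submodule.eq_starProjection_of_mem_of_inner_eq_zero (A x).2 ?_
    intro w hw
    have := hA x ⟨w, hw⟩
    rw [Submodule.coe_inner] at this
    have h1 : ⟪J (x : V) - (A x : V), w⟫ = ⟪J (x:V), w⟫ - ⟪(A x : V), w⟫ :=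
      inner_sub_left _ _ _
    rw [h1, ← this]
    ring
  -- the linear map Φ₀
  set Φ₀ : W →ₗ[ℝ] V := (J ∘ₗ W.subtype) - (W.subtype ∘ₗ A) with hΦ₀def
  have hΦ₀ : ∀ x : W, Φ₀ x = J (x : V) - (A x : V) := fun x => rfl
  have hΦeq : ∀ x : W, Φ x = Φ₀ x := by
    intro x; rw [hΦ x, hproj x, hΦ₀]
  have hAA : ∀ x : W, A (A x) = -(Real.cos θ ^ 2) • x := by
    intro x
    have := congrArg (fun f => f x) hEq
    simpa using this
  have hsincos : Real.sin θ ^ 2 = 1 - Real.cos θ ^ 2 := by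
    have := Real.sin_sq_add_cos_sq θ; linarith
  -- P1 : projection of J (Φ₀ x)
  have hP1 : ∀ x : W, (Submodule.orthogonalProjection W (J (Φ₀ x)) : V)
      = -(Real.sin θ ^ 2) • (x : V) := by
    intro x
    have h1 : J (Φ₀ x) = -(x : V) - J ((A x : V)) := by
      rw [hΦ₀, map_sub, hJJ]
    rw [h1]
    have h2 : (-(x : V) - J ((A x : V)))
        = ((-x - A (A x) : W) : V) + (-(J ((A x : V)) - (Submodule.orthogonalProjection W (J ((A x : V))) : V))) := by
      push_cast
      rw [hproj (A x)]
      abel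
    have hq : (Submodule.orthogonalProjection W (-(x : V) - J ((A x : V))) : V) = ((-x - A (A x) : W) : V) :=
      Submodule.eq_starProjection_of_mem_orthogonal' (K := W) (-x - A (A x)).2
      (Submodule.neg_mem _ (Submodule.sub_starProjection_mem_orthogonal _)) h2
    rw [hq]
    rw [hAA]
    push_cast
    rw [hsincos]
    module
  -- Φ₀ maps into Wᗮ
  have hmem : ∀ x : W, Φ₀ x ∈ Wᗮ := by
    intro x
    have : J (x : V) - (Submodule.orthogonalProjection W (J (x : V)) : V) ∈ Wᗮ := Submodule.sub_starProjection_mem_orthogonal (K := W) (J (x : V))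
    rwa [hproj x, ← hΦ₀] at this
  -- norm identity
  have hnorm : ∀ x : W, ⟪Φ₀ x, Φ₀ x⟫ = Real.sin θ ^ 2 * ⟪(x : V), (x : V)⟫ := by
    intro x
    have hAx : ⟪(A x : V), (A x : V)⟫ = Real.cos θ ^ 2 * ⟪(x : V), (x : V)⟫ := by
      have h1 := hA (A x) x
      rw [Submodule.coe_inner] at h1
      have h2 : ⟪J ((A x : V)), (x : V)⟫ = -⟪(A x : V), J (x : V)⟫ := by
        rw [← hJorth (A x : V) (J (x : V)), hJJ]
        simp [inner_neg_right]
      have h3 := hA x (A x)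
      rw [Submodule.coe_inner] at h3
      have h4 := hAA x
      have h5 : ⟪(A (A x) : V), (x : V)⟫ = -(Real.cos θ ^2) * ⟪(x : V), (x : V)⟫ := by
        rw [h4]; push_cast; rw [inner_smul_left]; simp
      -- h3 : ⟪A x, A x⟫ = ⟪J x, A x⟫, so ⟪Ax,Ax⟫ = ⟪Jx,Ax⟫.
      have h6 : (⟪(A (A x) : V), (x : V)⟫ : ℝ) = -⟪(A x : V), (A x : V)⟫ := by
        have hcomm : ⟪(A x : V), J (x : V)⟫ = ⟪J (x : V), (A x : V)⟫ :=
          real_inner_comm _ _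
        rw [h1, h2, hcomm, ← h3]
      rw [h5] at h6; linarith
    have hJxAx : ⟪J (x : V), (A x : V)⟫ = ⟪(A x : V), (A x : V)⟫ := by
      have := hA x (A x); rw [Submodule.coe_inner] at this; rw [← this]
    rw [hΦ₀]
    rw [inner_sub_sub_self]
    have hcomm : ⟪(A x : V), J (x : V)⟫ = ⟪J (x : V), (A x : V)⟫ :=
      real_inner_comm _ _
    rw [hJorth, hcomm, hJxAx, hAx, hsincos]
    ring
  constructor
  · intro x
    rw [hΦeq, hΞ, hP1]
    module
  · intro u hu
    -- p := proj (J u), goal: -(Φ₀ p) = sin²θ • u  after rewriting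
    rw [hΞ]
    set p : W := Submodule.orthogonalProjection W (J u) with hp
    have hgoal : J ((p : V)) - (Submodule.orthogonalProjection W (J ((p : V))) : V) = Φ₀ p := by
      rw [hproj p, hΦ₀]
    rw [hgoal]
    by_cases hs : Real.sin θ = 0
    · have h0 : Φ₀ p = 0 := by
        have := hnorm p
        rw [hs] at this
        simp only [zero_pow, ne_eq, OfNat.ofNat_ne_zero, not_false_iff, zero_mul] at this
        exact (inner_self_eq_zero (𝕜 := ℝ)).mp (by simpa using this)
      rw [h0, hs]
      simp
    · -- surjectivity of Φ₀ onto Wᗮ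
      have hs2 : Real.sin θ ^ 2 ≠ 0 := pow_ne_zero _ hs
      set Φ₁ : W →ₗ[ℝ] ↥Wᗮ := Φ₀.codRestrict Wᗮ hmem with hΦ₁
      have hinj : Function.Injective Φ₁ := by
        rw [← LinearMap.ker_eq_bot]
        rw [Submodule.eq_bot_iff]
        intro x hx
        have hx0 : Φ₀ x = 0 := by
          have : Φ₁ x = 0 := hx
          exact congrArg Subtype.val this
        have := hP1 x
        rw [hx0, map_zero] at this
        have h0 : (0 : V) = -(Real.sin θ ^ 2) • (x : V) := by simpa using this
        have hx0' : (-(Real.sin θ ^ 2)) • (x : V) = 0 := h0.symm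
        rcases smul_eq_zero.mp hx0' with h | h
        · exact absurd (neg_eq_zero.mp h) hs2
        · exact Subtype.ext h
      have hdimeq : Module.finrank ℝ W = Module.finrank ℝ ↥Wᗮ := by
        have := Submodule.finrank_add_finrank_orthogonal (K := W)
        omega
      have hsurj : Function.Surjective Φ₁ :=
        (LinearMap.injective_iff_surjective_of_finrank_eq_finrank hdimeq).mp hinj
      obtain ⟨x, hx⟩ := hsurj ⟨u, hu⟩
      have hux : Φ₀ x = u := congrArg Subtype.val hx
      have hpx : (p : V) = -(Real.sin θ ^ 2) • (x : V) := by
        rw [hp]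
        have : (Submodule.orthogonalProjection W (J u) : V) = (Submodule.orthogonalProjection W (J (Φ₀ x)) : V) := by
          rw [hux]
        rw [this, hP1]
      have hpx' : p = (-(Real.sin θ ^ 2)) • x := by
        apply Subtype.ext
        rw [hpx]; push_cast; ring_nf
      rw [hpx', map_smul, hux]
      module
end

section
/- Let W be a 2n-dimensional subspace of a Hermitian space (V,J,g) of real dimension 4n, and let ω(X,Y)=g(JX,Y). Then the restriction of ω to W and the restriction of ω to W^⊥ have the same eigenvalues; i.e., W and its orthogonal complement have the same Kähler angles. -/
open scoped RealInnerProductSpace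
open Module Polynomial Matrix

universe u

open Matrix Polynomial in
theorem my_charpoly_conj {ι : Type*} [Fintype ι] [DecidableEq ι]
    (U X Vm : Matrix ι ι ℝ) (hUV : U * Vm = 1) :
    (U * X * Vm).charpoly = X.charpoly := by
  have hc : charmatrix (U * X * Vm) = (U.map C) * charmatrix X * (Vm.map C) := by
    rw [charmatrix, charmatrix]
    have h1 : (C.mapMatrix (U * X * Vm) : Matrix ι ι ℝ[X]) = U.map C * C.mapMatrix X * Vm.map C := by
      ext i j; simp [Matrix.mul_apply, RingHom.mapMatrix_apply, Finset.sum_mul, Finset.mul_sum]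
    rw [h1, Matrix.mul_sub, Matrix.sub_mul]
    congr 1
    rw [Matrix.mul_assoc, scalar_commute _ (fun r => Commute.all _ _), ← Matrix.mul_assoc,
      ← Matrix.map_mul, hUV]
    simp
  have hdet : (U.map C).det * (Vm.map C).det = 1 := by
    rw [← Matrix.det_mul, ← Matrix.map_mul, hUV]; simp
  rw [Matrix.charpoly, hc, Matrix.det_mul, Matrix.det_mul, Matrix.charpoly]
  rw [mul_comm ((U.map C).det), mul_assoc, hdet, mul_one]

open Matrix Polynomial in
theorem my_charpoly_mul_comm {ι : Type*} [Fintype ι] [DecidableEq ι]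
    (M N : Matrix ι ι ℝ) : (M * N).charpoly = (N * M).charpoly := by
  have hUV : fromBlocks (1 : Matrix ι ι ℝ) (0 : Matrix ι ι ℝ) (-N) (1 : Matrix ι ι ℝ) * fromBlocks (1 : Matrix ι ι ℝ) (0 : Matrix ι ι ℝ) N (1 : Matrix ι ι ℝ) = 1 := by
    rw [fromBlocks_multiply]
    simp [← fromBlocks_one]
  have hconj : fromBlocks (1 : Matrix ι ι ℝ) (0 : Matrix ι ι ℝ) (-N) (1 : Matrix ι ι ℝ) * fromBlocks (0 : Matrix ι ι ℝ) M (0 : Matrix ι ι ℝ) (N*M) *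
      fromBlocks (1 : Matrix ι ι ℝ) (0 : Matrix ι ι ℝ) N (1 : Matrix ι ι ℝ) = fromBlocks (M*N) M (0 : Matrix ι ι ℝ) (0 : Matrix ι ι ℝ) := by
    rw [fromBlocks_multiply, fromBlocks_multiply]
    simp [Matrix.mul_assoc]
  have := my_charpoly_conj (fromBlocks (1 : Matrix ι ι ℝ) (0 : Matrix ι ι ℝ) (-N) (1 : Matrix ι ι ℝ))
    (fromBlocks (0 : Matrix ι ι ℝ) M (0 : Matrix ι ι ℝ) (N*M)) (fromBlocks (1 : Matrix ι ι ℝ) (0 : Matrix ι ι ℝ) N (1 : Matrix ι ι ℝ)) hUV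
  rw [hconj] at this
  rw [charpoly_fromBlocks_zero₂₁, charpoly_fromBlocks_zero₂₁] at this
  have h0 : (0 : Matrix ι ι ℝ).charpoly ≠ 0 := (Matrix.charpoly_monic _).ne_zero
  have := this.symm
  -- this : (0).charpoly * (N*M).charpoly = (M*N).charpoly * (0).charpoly
  rw [mul_comm (charpoly 0)] at this
  exact (mul_right_cancel₀ h0 this).symm

theorem skew_normal_form (m : ℕ) :
    ∀ (E : Type u) [NormedAddCommGroup E], ∀ [InnerProductSpace ℝ E] [FiniteDimensional ℝ E],
    Module.finrank ℝ E = 2 * m → ∀ A : E →ₗ[ℝ] E, (∀ x y : E, ⟪A x, y⟫ = -⟪x, A y⟫) →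
    ∃ c : Fin m → ℝ, (∀ α, 0 ≤ c α) ∧ ∃ b : OrthonormalBasis (Fin m ⊕ Fin m) ℝ E,
      (∀ α, A (b (Sum.inl α)) = c α • b (Sum.inr α)) ∧
      (∀ α, A (b (Sum.inr α)) = -(c α) • b (Sum.inl α)) := by
  induction m with
  | zero =>
    intro E _ _ _ hdim A hskew
    refine ⟨0, fun α => le_refl _, ?_⟩
    refine ⟨(stdOrthonormalBasis ℝ E).reindex ((finCongr (by rw [hdim] : finrank ℝ E = 0)).trans (Equiv.equivOfIsEmpty _ _)),
      fun α => α.elim0, fun α => α.elim0⟩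
  | succ m ih =>
    intro E _ _ _ hdim A hskew
    by_cases hA0 : A = 0
    · refine ⟨0, fun α => le_refl _, ?_⟩
      have e : Fin (finrank ℝ E) ≃ (Fin (m+1) ⊕ Fin (m+1)) :=
        (finCongr (by rw [hdim]; omega)).trans finSumFinEquiv.symm
      exact ⟨(stdOrthonormalBasis ℝ E).reindex e,
        fun α => by simp [hA0], fun α => by simp [hA0]⟩
    · -- A ≠ 0 : find eigenvector of T = -A² with positive eigenvalue
      set T : E →ₗ[ℝ] E := -(A ∘ₗ A) with hT_def
      have hT : T.IsSymmetric := by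
        intro x y
        simp only [hT_def, LinearMap.neg_apply, LinearMap.comp_apply, inner_neg_left,
          inner_neg_right]
        rw [hskew (A x) y, hskew x (A y)]
        ring_nf
      have hdim' : finrank ℝ E = finrank ℝ E := rfl
      obtain ⟨i, hμpos, hvec⟩ :
          ∃ i : Fin (finrank ℝ E), 0 < hT.eigenvalues hdim' i ∧
            T (hT.eigenvectorBasis hdim' i) =
              hT.eigenvalues hdim' i • hT.eigenvectorBasis hdim' i := by
        have key : ∀ i, T (hT.eigenvectorBasis hdim' i) =
            hT.eigenvalues hdim' i • hT.eigenvectorBasis hdim' i := fun i =>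
          (hT.hasEigenvector_eigenvectorBasis hdim' i).apply_eq_smul
        by_contra hcon
        push_neg at hcon
        have hTx : ∀ x : E, ⟪T x, x⟫ = ⟪A x, A x⟫ := by
          intro x
          simp only [hT_def, LinearMap.neg_apply, LinearMap.comp_apply, inner_neg_left]
          rw [hskew (A x) x]
          ring_nf
        have hnn : ∀ i, 0 ≤ hT.eigenvalues hdim' i := by
          intro i
          have h1 : ⟪T (hT.eigenvectorBasis hdim' i), hT.eigenvectorBasis hdim' i⟫ =
              hT.eigenvalues hdim' i := by
            rw [key i, real_inner_smul_left, real_inner_self_eq_norm_sq,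
              ((hT.eigenvectorBasis hdim').orthonormal.1 i)]
            ring
          rw [← h1, hTx]
          exact real_inner_self_nonneg
        have hzero : ∀ i, hT.eigenvalues hdim' i = 0 := by
          intro i
          rcases lt_or_eq_of_le (hnn i) with h | h
          · exact absurd (key i) (hcon i h)
          · exact h.symm
        have hTzero : T = 0 := by
          apply (hT.eigenvectorBasis hdim').toBasis.ext
          intro i
          rw [OrthonormalBasis.coe_toBasis, key i, hzero i, zero_smul,
            LinearMap.zero_apply]
        apply hA0
        ext x
        have : ⟪A x, A x⟫ = 0 := by rw [← hTx, hTzero]; simp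
        simpa using inner_self_eq_zero.mp this
      set v : E := hT.eigenvectorBasis hdim' i with hv_def
      set μ : ℝ := hT.eigenvalues hdim' i with hμ_def
      have hv1 : ‖v‖ = 1 := (hT.eigenvectorBasis hdim').orthonormal.1 i
      set c₀ : ℝ := Real.sqrt μ with hc₀_def
      have hc₀pos : 0 < c₀ := Real.sqrt_pos.2 hμpos
      have hc₀sq : c₀ * c₀ = μ := Real.mul_self_sqrt hμpos.le
      set w : E := c₀⁻¹ • A v with hw_def
      have hAv : A v = c₀ • w := by
        rw [hw_def, smul_smul, mul_inv_cancel₀ hc₀pos.ne', one_smul]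
      have hAAv : A (A v) = -μ • v := by
        have h1 : T v = μ • v := hvec
        have : -(A (A v)) = μ • v := by
          simpa [hT_def] using h1
        have h2 : A (A v) = -(μ • v) := neg_eq_iff_eq_neg.mp this
        rw [h2]; module
      have hAw : A w = -c₀ • v := by
        rw [hw_def, _root_.map_smul, hAAv, smul_smul]
        congr 1
        field_simp
        nlinarith [hc₀sq]
      have hvw : ⟪v, w⟫ = 0 := by
        have h1 : ⟪A v, v⟫ = -⟪v, A v⟫ := hskew v v
        have h2 : ⟪A v, v⟫ = ⟪v, A v⟫ := real_inner_comm _ _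
        have h3 : ⟪v, A v⟫ = 0 := by linarith
        rw [hw_def, real_inner_smul_right, h3, mul_zero]
      have hAvAv : ⟪A v, A v⟫ = μ := by
        have : ⟪A v, A v⟫ = -⟪v, A (A v)⟫ := hskew v (A v)
        rw [this, hAAv, real_inner_smul_right, real_inner_self_eq_norm_sq, hv1]
        ring
      have hw1 : ‖w‖ = 1 := by
        have h2 : ⟪w, w⟫ = 1 := by
          rw [hw_def, real_inner_smul_left, real_inner_smul_right, hAvAv]
          field_simp
          nlinarith [hc₀sq]
        have h3 : ‖w‖ * ‖w‖ = 1 := by rw [← real_inner_self_eq_norm_mul_norm, h2]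
        nlinarith [norm_nonneg w]
      have hwv : ⟪w, v⟫ = 0 := by rw [real_inner_comm]; exact hvw
      set U : Submodule ℝ E := Submodule.span ℝ (Set.range ![v, w]) with hU_def
      have hon2 : Orthonormal ℝ ![v, w] := by
        constructor
        · intro j; fin_cases j <;> simpa
        · intro j k hjk
          fin_cases j <;> fin_cases k
          · exact absurd rfl hjk
          · exact hvw
          · exact hwv
          · exact absurd rfl hjk
      have hvU : v ∈ U := Submodule.subset_span ⟨0, rfl⟩
      have hwU : w ∈ U := Submodule.subset_span ⟨1, rfl⟩
      have hUrank : finrank ℝ U = 2 := by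
        rw [hU_def, finrank_span_eq_card hon2.linearIndependent]
        simp
      have hUorank : finrank ℝ Uᗮ = 2 * m := by
        have := Submodule.finrank_add_finrank_orthogonal U
        omega
      have hAinv : ∀ z ∈ Uᗮ, A z ∈ Uᗮ := by
        intro z hz
        have hzv : ⟪v, z⟫ = 0 := (Submodule.mem_orthogonal U z).1 hz v hvU
        have hzw : ⟪w, z⟫ = 0 := (Submodule.mem_orthogonal U z).1 hz w hwU
        rw [Submodule.mem_orthogonal]
        intro u hu
        induction hu using Submodule.span_induction with
        | mem x hx =>
          obtain ⟨j, rfl⟩ := hx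
          fin_cases j
          · show ⟪v, A z⟫ = 0
            rw [real_inner_comm, hskew z v, hAv, real_inner_smul_right]
            rw [real_inner_comm] at hzw
            rw [hzw]; ring
          · show ⟪w, A z⟫ = 0
            rw [real_inner_comm, hskew z w, hAw, real_inner_smul_right]
            rw [real_inner_comm] at hzv
            rw [hzv]; ring
        | zero => simp
        | add x y _ _ hx hy => rw [inner_add_left, hx, hy]; ring
        | smul a x _ hx => rw [real_inner_smul_left, hx]; ring
      set A' : Uᗮ →ₗ[ℝ] Uᗮ := A.restrict hAinv with hA'_def
      have hA'skew : ∀ x y : Uᗮ, ⟪A' x, y⟫ = -⟪x, A' y⟫ := by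
        intro x y
        have h1 : (⟪A' x, y⟫ : ℝ) = ⟪A (x : E), (y : E)⟫ := rfl
        have h2 : (⟪x, A' y⟫ : ℝ) = ⟪(x : E), A (y : E)⟫ := rfl
        rw [h1, h2, hskew]
      obtain ⟨c', hc'nn, b'', hb1, hb2⟩ := ih Uᗮ hUorank A' hA'skew
      set g : (Fin (m+1) ⊕ Fin (m+1)) → E :=
        Sum.elim (Fin.cons v (fun α => ((b'' (Sum.inl α)) : E)))
                 (Fin.cons w (fun α => ((b'' (Sum.inr α)) : E))) with hg_def
      have hbb : ∀ k l, ⟪((b'' k) : E), ((b'' l) : E)⟫ = if k = l then (1:ℝ) else 0 := by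
        intro k l
        have h := orthonormal_iff_ite.mp b''.orthonormal k l
        rwa [Submodule.coe_inner] at h
      have hvb : ∀ k, ⟪v, ((b'' k) : E)⟫ = 0 :=
        fun k => (Submodule.mem_orthogonal U _).1 (b'' k).2 v hvU
      have hwb : ∀ k, ⟪w, ((b'' k) : E)⟫ = 0 :=
        fun k => (Submodule.mem_orthogonal U _).1 (b'' k).2 w hwU
      have hbv : ∀ k, ⟪((b'' k) : E), v⟫ = 0 := fun k => by
        rw [real_inner_comm]; exact hvb k
      have hbw : ∀ k, ⟪((b'' k) : E), w⟫ = 0 := fun k => by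
        rw [real_inner_comm]; exact hwb k
      have hgon : Orthonormal ℝ g := by
        rw [orthonormal_iff_ite]
        rintro (p | p) (q | q) <;>
          rcases Fin.eq_zero_or_eq_succ p with rfl | ⟨p', rfl⟩ <;>
          rcases Fin.eq_zero_or_eq_succ q with rfl | ⟨q', rfl⟩
        · simp [hg_def, real_inner_self_eq_norm_mul_norm, hv1]
        · simp [hg_def, Fin.cons_succ, hvb, (Fin.succ_ne_zero q').symm]
        · simp [hg_def, Fin.cons_succ, hbv, Fin.succ_ne_zero p']
        · simp [hg_def, Fin.cons_succ, hbb, Fin.succ_inj]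
        · simp [hg_def, hvw]
        · simp [hg_def, Fin.cons_succ, hvb]
        · simp [hg_def, Fin.cons_succ, hbw]
        · simp [hg_def, Fin.cons_succ, hbb]
        · simp [hg_def, hwv]
        · simp [hg_def, Fin.cons_succ, hwb]
        · simp [hg_def, Fin.cons_succ, hbv]
        · simp [hg_def, Fin.cons_succ, hbb]
        · simp [hg_def, real_inner_self_eq_norm_mul_norm, hw1]
        · simp [hg_def, Fin.cons_succ, hwb, (Fin.succ_ne_zero q').symm]
        · simp [hg_def, Fin.cons_succ, hbw, Fin.succ_ne_zero p']
        · simp [hg_def, Fin.cons_succ, hbb, Fin.succ_inj]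
      have hcard : Fintype.card (Fin (m+1) ⊕ Fin (m+1)) = finrank ℝ E := by
        simp [hdim]; omega
      let gb : Basis (Fin (m+1) ⊕ Fin (m+1)) ℝ E :=
        basisOfLinearIndependentOfCardEqFinrank hgon.linearIndependent hcard
      have hgb : ⇑gb = g := coe_basisOfLinearIndependentOfCardEqFinrank _ _
      let bb : OrthonormalBasis (Fin (m+1) ⊕ Fin (m+1)) ℝ E :=
        gb.toOrthonormalBasis (by rwa [hgb])
      have hb : ⇑bb = g := by rw [Basis.coe_toOrthonormalBasis, hgb]
      refine ⟨Fin.cons c₀ c', ?_, bb, ?_, ?_⟩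
      · intro α
        rcases Fin.eq_zero_or_eq_succ α with rfl | ⟨β, rfl⟩
        · simpa using hc₀pos.le
        · simpa [Fin.cons_succ] using hc'nn β
      · intro α
        rcases Fin.eq_zero_or_eq_succ α with rfl | ⟨β, rfl⟩
        · simp only [hb, hg_def, Sum.elim_inl, Sum.elim_inr, Fin.cons_zero]
          exact hAv
        · simp only [hb, hg_def, Sum.elim_inl, Sum.elim_inr, Fin.cons_succ]
          have h2 : A ((b'' (Sum.inl β)) : E) = ((A' (b'' (Sum.inl β))) : E) := rfl
          rw [h2, hb1 β, Submodule.coe_smul]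
      · intro α
        rcases Fin.eq_zero_or_eq_succ α with rfl | ⟨β, rfl⟩
        · simp only [hb, hg_def, Sum.elim_inl, Sum.elim_inr, Fin.cons_zero]
          exact hAw
        · simp only [hb, hg_def, Sum.elim_inl, Sum.elim_inr, Fin.cons_succ]
          have h2 : A ((b'' (Sum.inr β)) : E) = ((A' (b'' (Sum.inr β))) : E) := rfl
          rw [h2, hb2 β, Submodule.coe_smul]

theorem my_charpoly_diagonal {ι : Type*} [Fintype ι] [DecidableEq ι] (d : ι → ℝ) :
    (Matrix.diagonal d).charpoly = ∏ i, (X - C (d i)) := by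
  rw [Matrix.charpoly]
  have h : charmatrix (Matrix.diagonal d) = Matrix.diagonal fun i => (X : ℝ[X]) - C (d i) := by
    ext i j
    by_cases h : i = j
    · subst h; rw [charmatrix_apply_eq, Matrix.diagonal_apply_eq, Matrix.diagonal_apply_eq]
    · rw [charmatrix_apply_ne _ _ _ h, Matrix.diagonal_apply_ne _ h, Matrix.diagonal_apply_ne _ h,
        map_zero, neg_zero]
  rw [h, Matrix.det_diagonal]

theorem my_roots_prod {ι : Type*} [Fintype ι] (d : ι → ℝ) :
    (∏ i, ((X : ℝ[X]) - C (d i))).roots = Finset.univ.val.map d := by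
  have h : (Finset.univ.val.map fun i => (X : ℝ[X]) - C (d i))
      = (Finset.univ.val.map d).map (fun a => X - C a) := by
    rw [Multiset.map_map]; rfl
  rw [Finset.prod_eq_multiset_prod, h, Polynomial.roots_multiset_prod_X_sub_C]

/-- A `2n`-dimensional subspace `W` of a `4n`-dimensional Hermitian space and
its orthogonal complement `Wᗮ` have the same Kähler angles: the skew operators
of `ω` restricted to `W` and to `Wᗮ` have the same eigenvalue cosines, i.e.
simultaneous normal forms with the same coefficients `c_α`. -/
theorem kahler_angles_of_normal_bundle
    (n : ℕ) (V : Type*) [NormedAddCommGroup V] [InnerProductSpace ℝ V]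
    [FiniteDimensional ℝ V] (hdim : Module.finrank ℝ V = 4 * n)
    (J : V →ₗ[ℝ] V) (hJ2 : J ∘ₗ J = -LinearMap.id)
    (hJorth : ∀ x y : V, ⟪J x, J y⟫ = ⟪x, y⟫)
    (W : Submodule ℝ V) (hW : Module.finrank ℝ W = 2 * n)
    (A : W →ₗ[ℝ] W) (hA : ∀ x y : W, ⟪A x, y⟫ = ⟪J (x : V), (y : V)⟫)
    (B : Wᗮ →ₗ[ℝ] Wᗮ) (hB : ∀ u v : Wᗮ, ⟪B u, v⟫ = ⟪J (u : V), (v : V)⟫) :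
    ∃ c : Fin n → ℝ, (∀ α, 0 ≤ c α) ∧
      (∃ b : OrthonormalBasis (Fin n ⊕ Fin n) ℝ W,
        (∀ α, A (b (Sum.inl α)) = c α • b (Sum.inr α)) ∧
        (∀ α, A (b (Sum.inr α)) = -(c α) • b (Sum.inl α))) ∧
      (∃ b' : OrthonormalBasis (Fin n ⊕ Fin n) ℝ Wᗮ,
        (∀ α, B (b' (Sum.inl α)) = c α • b' (Sum.inr α)) ∧
        (∀ α, B (b' (Sum.inr α)) = -(c α) • b' (Sum.inl α))) := by
  have hJJ : ∀ x : V, J (J x) = -x := fun x => by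
    have := LinearMap.ext_iff.mp hJ2 x
    simpa using this
  have hJskew : ∀ a b : V, ⟪J a, b⟫ = -⟪a, J b⟫ := by
    intro a b
    have h1 : ⟪J a, J (J b)⟫ = ⟪a, J b⟫ := hJorth a (J b)
    rw [hJJ b, inner_neg_right] at h1
    linarith
  have hWo : Module.finrank ℝ Wᗮ = 2 * n := by
    have := Submodule.finrank_add_finrank_orthogonal W
    rw [hW, hdim] at this
    omega
  have horth : ∀ (w : W) (u : Wᗮ), ⟪(u : V), (w : V)⟫ = 0 := by
    intro w u
    have := (Submodule.mem_orthogonal W (u : V)).1 u.2 (w : V) w.2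
    rwa [real_inner_comm] at this
  have horth' : ∀ (w : W) (u : Wᗮ), ⟪(w : V), (u : V)⟫ = 0 := by
    intro w u; rw [real_inner_comm]; exact horth w u
  -- P and Q
  have hPmem : ∀ x : W, ((J ∘ₗ W.subtype - W.subtype ∘ₗ A) x) ∈ Wᗮ := by
    intro x
    rw [Submodule.mem_orthogonal]
    intro u hu
    simp only [LinearMap.sub_apply, LinearMap.comp_apply, Submodule.coe_subtype, inner_sub_right]
    have h1 : ⟪u, J (x : V)⟫ = ⟪A x, (⟨u, hu⟩ : W)⟫ := by
      rw [hA x ⟨u, hu⟩, real_inner_comm]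
    have h2 : (⟪u, ((A x : W) : V)⟫ : ℝ) = ⟪A x, (⟨u, hu⟩ : W)⟫ := by
      rw [real_inner_comm]; rfl
    rw [h1, h2, sub_self]
  have hQmem : ∀ u : Wᗮ, ((J ∘ₗ Wᗮ.subtype - Wᗮ.subtype ∘ₗ B) u) ∈ W := by
    intro u
    suffices h : ((J ∘ₗ Wᗮ.subtype - Wᗮ.subtype ∘ₗ B) u) ∈ Wᗮᗮ by
      rwa [Submodule.orthogonal_orthogonal] at h
    rw [Submodule.mem_orthogonal]
    intro z hz
    simp only [LinearMap.sub_apply, LinearMap.comp_apply, Submodule.coe_subtype, inner_sub_right]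
    have h1 : ⟪z, J (u : V)⟫ = ⟪B u, (⟨z, hz⟩ : Wᗮ)⟫ := by
      rw [hB u ⟨z, hz⟩, real_inner_comm]
    have h2 : (⟪z, ((B u : Wᗮ) : V)⟫ : ℝ) = ⟪B u, (⟨z, hz⟩ : Wᗮ)⟫ := by
      rw [real_inner_comm]; rfl
    rw [h1, h2, sub_self]
  set P : W →ₗ[ℝ] Wᗮ := (J ∘ₗ W.subtype - W.subtype ∘ₗ A).codRestrict Wᗮ hPmem with hP_def
  set Q : Wᗮ →ₗ[ℝ] W := (J ∘ₗ Wᗮ.subtype - Wᗮ.subtype ∘ₗ B).codRestrict W hQmem with hQ_def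
  have hPcoe : ∀ x : W, ((P x : V)) = J (x : V) - ((A x : W) : V) := fun x => rfl
  have hQcoe : ∀ u : Wᗮ, ((Q u : V)) = J (u : V) - ((B u : Wᗮ) : V) := fun u => rfl
  have ext_innerW : ∀ z₁ z₂ : W, (∀ y : W, ⟪z₁, y⟫ = ⟪z₂, y⟫) → z₁ = z₂ := by
    intro z₁ z₂ h
    have h0 : ⟪z₁ - z₂, z₁ - z₂⟫ = 0 := by
      rw [inner_sub_left, h (z₁ - z₂)]; ring
    have := inner_self_eq_zero.mp h0
    rwa [sub_eq_zero] at this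
  have ext_innerWo : ∀ z₁ z₂ : Wᗮ, (∀ y : Wᗮ, ⟪z₁, y⟫ = ⟪z₂, y⟫) → z₁ = z₂ := by
    intro z₁ z₂ h
    have h0 : ⟪z₁ - z₂, z₁ - z₂⟫ = 0 := by
      rw [inner_sub_left, h (z₁ - z₂)]; ring
    have := inner_self_eq_zero.mp h0
    rwa [sub_eq_zero] at this
  have hQP : ∀ x : W, Q (P x) = -(x + A (A x)) := by
    intro x
    apply ext_innerW
    intro y
    have lhs1 : (⟪Q (P x), y⟫ : ℝ) = ⟪(Q (P x) : V), (y : V)⟫ := rfl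
    rw [lhs1, hQcoe, inner_sub_left, horth y (B (P x)), sub_zero, hPcoe, map_sub, hJJ,
      inner_sub_left, inner_neg_left]
    have h3 : ⟪J ((A x : W) : V), (y : V)⟫ = ⟪A (A x), y⟫ := (hA (A x) y).symm
    rw [h3]
    have rhs : (⟪-(x + A (A x)), y⟫ : ℝ) = -(⟪(x:V), (y:V)⟫ + ⟪A (A x), y⟫) := by
      rw [inner_neg_left, inner_add_left]; rfl
    rw [rhs]
    ring
  have hPQ : ∀ u : Wᗮ, P (Q u) = -(u + B (B u)) := by
    intro u
    apply ext_innerWo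
    intro y
    have lhs1 : (⟪P (Q u), y⟫ : ℝ) = ⟪(P (Q u) : V), (y : V)⟫ := rfl
    rw [lhs1, hPcoe, inner_sub_left, horth' (A (Q u)) y, sub_zero, hQcoe, map_sub, hJJ,
      inner_sub_left, inner_neg_left]
    have h3 : ⟪J ((B u : Wᗮ) : V), (y : V)⟫ = ⟪B (B u), y⟫ := (hB (B u) y).symm
    rw [h3]
    have rhs : (⟪-(u + B (B u)), y⟫ : ℝ) = -(⟪(u:V), (y:V)⟫ + ⟪B (B u), y⟫) := by
      rw [inner_neg_left, inner_add_left]; rfl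
    rw [rhs]
    ring
  have hAskew : ∀ x y : W, ⟪A x, y⟫ = -⟪x, A y⟫ := by
    intro x y
    have h1 := hA x y
    have h2 := hA y x
    have h3 := hJskew (x : V) (y : V)
    have h4 : (⟪x, A y⟫ : ℝ) = ⟪A y, x⟫ := real_inner_comm _ _
    have h5 : (⟪(x:V), J (y:V)⟫ : ℝ) = ⟪J (y:V), (x:V)⟫ := real_inner_comm _ _
    linarith
  have hBskew : ∀ x y : Wᗮ, ⟪B x, y⟫ = -⟪x, B y⟫ := by
    intro x y
    have h1 := hB x y
    have h2 := hB y x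
    have h3 := hJskew (x : V) (y : V)
    have h4 : (⟪x, B y⟫ : ℝ) = ⟪B y, x⟫ := real_inner_comm _ _
    have h5 : (⟪(x:V), J (y:V)⟫ : ℝ) = ⟪J (y:V), (x:V)⟫ := real_inner_comm _ _
    linarith
  obtain ⟨c, hcnn, b, hbA1, hbA2⟩ := skew_normal_form n W hW A hAskew
  obtain ⟨c', hc'nn, b', hbB1, hbB2⟩ := skew_normal_form n Wᗮ hWo B hBskew
  classical
  set eA : Fin n → ℝ := fun α => c α ^ 2 - 1 with heA_def
  set eB : Fin n → ℝ := fun α => c' α ^ 2 - 1 with heB_def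
  set M := LinearMap.toMatrix b.toBasis b'.toBasis P with hM_def
  set N := LinearMap.toMatrix b'.toBasis b.toBasis Q with hN_def
  have hNM : N * M = LinearMap.toMatrix b.toBasis b.toBasis (Q ∘ₗ P) :=
    (LinearMap.toMatrix_comp _ b'.toBasis _ Q P).symm
  have hMN : M * N = LinearMap.toMatrix b'.toBasis b'.toBasis (P ∘ₗ Q) :=
    (LinearMap.toMatrix_comp _ b.toBasis _ P Q).symm
  have hdiagA : LinearMap.toMatrix b.toBasis b.toBasis (Q ∘ₗ P)
      = Matrix.diagonal (fun i => eA (Sum.elim id id i)) := by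
    have key : ∀ j, Q (P (b j)) = eA (Sum.elim id id j) • b j := by
      intro j
      rw [hQP]
      cases j with
      | inl α =>
        rw [hbA1 α, _root_.map_smul, hbA2 α, smul_smul, Sum.elim_inl, id_eq, heA_def]
        module
      | inr α =>
        rw [hbA2 α, _root_.map_smul, hbA1 α, smul_smul, Sum.elim_inr, id_eq, heA_def]
        module
    ext i j
    simp only [LinearMap.toMatrix_apply, LinearMap.comp_apply, OrthonormalBasis.coe_toBasis,
      key j, _root_.map_smul, Finsupp.smul_apply, OrthonormalBasis.coe_toBasis_repr_apply,
      OrthonormalBasis.repr_self, EuclideanSpace.single_apply, smul_eq_mul]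
    by_cases h : i = j
    · subst h; simp
    · simp [Matrix.diagonal_apply_ne _ h, h, Ne.symm h]
  have hdiagB : LinearMap.toMatrix b'.toBasis b'.toBasis (P ∘ₗ Q)
      = Matrix.diagonal (fun i => eB (Sum.elim id id i)) := by
    have key : ∀ j, P (Q (b' j)) = eB (Sum.elim id id j) • b' j := by
      intro j
      rw [hPQ]
      cases j with
      | inl α =>
        rw [hbB1 α, _root_.map_smul, hbB2 α, smul_smul, Sum.elim_inl, id_eq, heB_def]
        module
      | inr α =>
        rw [hbB2 α, _root_.map_smul, hbB1 α, smul_smul, Sum.elim_inr, id_eq, heB_def]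
        module
    ext i j
    simp only [LinearMap.toMatrix_apply, LinearMap.comp_apply, OrthonormalBasis.coe_toBasis,
      key j, _root_.map_smul, Finsupp.smul_apply, OrthonormalBasis.coe_toBasis_repr_apply,
      OrthonormalBasis.repr_self, EuclideanSpace.single_apply, smul_eq_mul]
    by_cases h : i = j
    · subst h; simp
    · simp [Matrix.diagonal_apply_ne _ h, h, Ne.symm h]
  have hchar : (Matrix.diagonal (fun i => eA (Sum.elim id id i))).charpoly
      = (Matrix.diagonal (fun i => eB (Sum.elim id id i))).charpoly := by
    rw [← hdiagA, ← hdiagB, ← hNM, ← hMN]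
    exact (my_charpoly_mul_comm M N).symm
  rw [my_charpoly_diagonal, my_charpoly_diagonal] at hchar
  have hroots := congrArg Polynomial.roots hchar
  rw [my_roots_prod, my_roots_prod] at hroots
  have huniv : (Finset.univ : Finset (Fin n ⊕ Fin n)).val
      = (Finset.univ.val.map Sum.inl) + (Finset.univ.val.map Sum.inr) := by
    rw [← Finset.univ_disjSum_univ]; rfl
  have hsplit : ∀ e : Fin n → ℝ,
      (Finset.univ : Finset (Fin n ⊕ Fin n)).val.map (fun i => e (Sum.elim id id i))
        = Finset.univ.val.map e + Finset.univ.val.map e := by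
    intro e
    rw [huniv, Multiset.map_add, Multiset.map_map, Multiset.map_map]
    rfl
  rw [hsplit eA, hsplit eB] at hroots
  have hAB : Finset.univ.val.map eA = Finset.univ.val.map eB := by
    rw [Multiset.ext]
    intro a
    have h := congrArg (Multiset.count a) hroots
    rw [Multiset.count_add, Multiset.count_add] at h
    omega
  have hcc' : Finset.univ.val.map c = Finset.univ.val.map c' := by
    have h1 : Finset.univ.val.map c = (Finset.univ.val.map eA).map (fun x => Real.sqrt (x + 1)) := by
      rw [Multiset.map_map]
      apply Multiset.map_congr rfl
      intro α _
      simp only [Function.comp_apply, heA_def]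
      rw [sub_add_cancel, Real.sqrt_sq (hcnn α)]
    have h2 : Finset.univ.val.map c' = (Finset.univ.val.map eB).map (fun x => Real.sqrt (x + 1)) := by
      rw [Multiset.map_map]
      apply Multiset.map_congr rfl
      intro α _
      simp only [Function.comp_apply, heB_def]
      rw [sub_add_cancel, Real.sqrt_sq (hc'nn α)]
    rw [h1, h2, hAB]
  have hperm : List.Perm (List.ofFn c) (List.ofFn c') := by
    rw [← Multiset.coe_eq_coe, ← Fin.univ_val_map, ← Fin.univ_val_map]
    exact hcc'
  set τ := Tuple.sort c with hτ_def
  set τ' := Tuple.sort c' with hτ'_def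
  have hsorted : c ∘ τ = c' ∘ τ' := by
    apply List.ofFn_injective
    have hp : List.Perm (List.ofFn (c ∘ τ)) (List.ofFn (c' ∘ τ')) :=
      ((τ.ofFn_comp_perm c).trans hperm).trans (τ'.ofFn_comp_perm c').symm
    exact List.Perm.eq_of_sortedLE (Tuple.monotone_sort c).sortedLE_ofFn
      (Tuple.monotone_sort c').sortedLE_ofFn hp
  refine ⟨c ∘ τ, fun α => hcnn _, ⟨b.reindex (Equiv.sumCongr τ τ).symm, ?_, ?_⟩,
    ⟨b'.reindex (Equiv.sumCongr τ' τ').symm, ?_, ?_⟩⟩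
  · intro α
    rw [OrthonormalBasis.reindex_apply, OrthonormalBasis.reindex_apply]
    simp only [Equiv.symm_symm, Equiv.sumCongr_apply, Sum.map_inl, Sum.map_inr]
    exact hbA1 (τ α)
  · intro α
    rw [OrthonormalBasis.reindex_apply, OrthonormalBasis.reindex_apply]
    simp only [Equiv.symm_symm, Equiv.sumCongr_apply, Sum.map_inl, Sum.map_inr]
    exact hbA2 (τ α)
  · intro α
    rw [OrthonormalBasis.reindex_apply, OrthonormalBasis.reindex_apply]
    simp only [Equiv.symm_symm, Equiv.sumCongr_apply, Sum.map_inl, Sum.map_inr]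
    have hα : (c ∘ τ) α = c' (τ' α) := congrFun hsorted α
    rw [hα]
    exact hbB1 (τ' α)
  · intro α
    rw [OrthonormalBasis.reindex_apply, OrthonormalBasis.reindex_apply]
    simp only [Equiv.symm_symm, Equiv.sumCongr_apply, Sum.map_inl, Sum.map_inr]
    have hα : (c ∘ τ) α = c' (τ' α) := congrFun hsorted α
    rw [hα]
    exact hbB2 (τ' α)
end

section
/- Let W ⊆ V be a 2n-dimensional subspace with equal Kähler angle θ of a 4n-dimensional Hermitian space (V,J,g). Then for all X,Y ∈ W and U,V' ∈ W^⊥: g(Φ(X),Φ(Y)) = sin²θ · g(X,Y) and g(Ξ(U),Ξ(V')) = sin²θ · g(U,V'), where Φ(X)=(JX)^⊥ and Ξ(U)=(JU)^⊤. -/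
open scoped RealInnerProductSpace

/-- For a `2n`-dimensional subspace `W` with equal Kähler angle `θ` of a
`4n`-dimensional Hermitian space: `g(Φ(X), Φ(Y)) = sin²θ · g(X,Y)` and
`g(Ξ(U), Ξ(V')) = sin²θ · g(U,V')`. -/
theorem equal_kahler_angles_Phi_Xi_conformal
    (n : ℕ) (V : Type*) [NormedAddCommGroup V] [InnerProductSpace ℝ V]
    [FiniteDimensional ℝ V] (hdim : Module.finrank ℝ V = 4 * n)
    (J : V →ₗ[ℝ] V) (hJ2 : J ∘ₗ J = -LinearMap.id)
    (hJorth : ∀ x y : V, ⟪J x, J y⟫ = ⟪x, y⟫)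
    (W : Submodule ℝ V) (hW : Module.finrank ℝ W = 2 * n)
    (θ : ℝ)
    (A : W →ₗ[ℝ] W) (hA : ∀ x y : W, ⟪A x, y⟫ = ⟪J (x : V), (y : V)⟫)
    (hEq : A ∘ₗ A = -(Real.cos θ ^ 2) • LinearMap.id)
    (Φ : W → V) (hΦ : ∀ x : W, Φ x = J (x : V) - (W.orthogonalProjection (J (x : V)) : V))
    (Ξ : Wᗮ → V) (hΞ : ∀ u : Wᗮ, Ξ u = (W.orthogonalProjection (J (u : V)) : V)) :
    (∀ x y : W, ⟪Φ x, Φ y⟫ = Real.sin θ ^ 2 * ⟪(x : V), (y : V)⟫) ∧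
    (∀ u v : Wᗮ, ⟪Ξ u, Ξ v⟫ = Real.sin θ ^ 2 * ⟪(u : V), (v : V)⟫) := by
  have hJJ : ∀ x : V, J (J x) = -x := by
    intro x
    have := congrArg (fun f => f x) hJ2
    simpa using this
  have hJskew : ∀ x y : V, ⟪J x, y⟫ = -⟪x, J y⟫ := by
    intro x y
    have h1 : ⟪J x, J (J y)⟫ = ⟪x, J y⟫ := hJorth x (J y)
    rw [hJJ y, inner_neg_right] at h1
    linarith
  have hAA : ∀ x : W, A (A x) = (-(Real.cos θ ^ 2)) • x := by
    intro x
    have := congrArg (fun f => f x) hEq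
    simpa using this
  have hWinner : ∀ x y : W, ⟪x, y⟫ = ⟪(x : V), (y : V)⟫ := fun x y => rfl
  -- inner products of A
  have hAinner : ∀ x y : W, ⟪A x, A y⟫ = Real.cos θ ^ 2 * ⟪x, y⟫ := by
    intro x y
    have h1 : ⟪A x, A y⟫ = ⟪J (x : V), ((A y : W) : V)⟫ := hA x (A y)
    have h2 : ⟪J (x : V), ((A y : W) : V)⟫ = -⟪(x : V), J ((A y : W) : V)⟫ :=
      hJskew _ _
    have h3 : ⟪A (A y), x⟫ = ⟪J ((A y : W) : V), (x : V)⟫ := hA (A y) x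
    have h4 : ⟪(x : V), J ((A y : W) : V)⟫ = ⟪A (A y), x⟫ := by
      rw [h3]; exact real_inner_comm _ _
    rw [h1, h2, h4, hAA y, inner_smul_left]
    simp only [RCLike.conj_to_real]
    rw [real_inner_comm y x]
    ring
  -- projection of J x is A x, for x ∈ W
  have hPA : ∀ x : W, (W.orthogonalProjection (J (x : V)) : V) = ((A x : W) : V) := by
    intro x
    refine Submodule.eq_starProjection_of_mem_of_inner_eq_zero (A x).2 ?_
    intro w hw
    have h := hA x ⟨w, hw⟩
    have hcoe : ⟪A x, (⟨w, hw⟩ : W)⟫ = ⟪((A x : W) : V), w⟫ := rfl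
    rw [hcoe] at h
    rw [inner_sub_left, h]
    ring
  -- Part 1
  have part1 : ∀ x y : W, ⟪Φ x, Φ y⟫ = Real.sin θ ^ 2 * ⟪(x : V), (y : V)⟫ := by
    intro x y
    rw [hΦ x, hΦ y, hPA x, hPA y]
    have e1 : ⟪J (x : V), ((A y : W) : V)⟫ = ⟪A x, A y⟫ := (hA x (A y)).symm
    have e2 : ⟪((A x : W) : V), J (y : V)⟫ = ⟪A y, A x⟫ := by
      rw [real_inner_comm]; exact (hA y (A x)).symm
    have e3 : ⟪((A x : W) : V), ((A y : W) : V)⟫ = ⟪A x, A y⟫ := rfl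
    rw [inner_sub_left, inner_sub_right, inner_sub_right, e1, e2, e3, hJorth,
      real_inner_comm (A y) (A x), hAinner y x, hWinner y x, real_inner_comm ((y : W) : V) ((x : W) : V), Real.sin_sq]
    ring
  refine ⟨part1, ?_⟩
  -- Part 2
  set s2 : ℝ := Real.sin θ ^ 2 with hs2
  let S : W →ₗ[ℝ] Wᗮ := Wᗮ.orthogonalProjection.toLinearMap ∘ₗ J ∘ₗ W.subtype
  let T : Wᗮ →ₗ[ℝ] W := W.orthogonalProjection.toLinearMap ∘ₗ J ∘ₗ Wᗮ.subtype
  have hScoe : ∀ x : W, ((S x : Wᗮ) : V) = Φ x := by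
    intro x
    simp only [S, LinearMap.comp_apply, ContinuousLinearMap.coe_coe, Submodule.subtype_apply]
    rw [show ((Wᗮ.orthogonalProjection (J (x : V)) : V)) = J (x : V) - (W.orthogonalProjection (J (x : V)) : V) from Submodule.starProjection_orthogonal_val _, hΦ x]
  have hTcoe : ∀ u : Wᗮ, ((T u : W) : V) = Ξ u := by
    intro u
    simp only [T, LinearMap.comp_apply, ContinuousLinearMap.coe_coe, Submodule.subtype_apply]
    rw [hΞ u]
  have hOinner : ∀ u v : Wᗮ, ⟪u, v⟫ = ⟪(u : V), (v : V)⟫ := fun u v => rfl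
  have hSS : ∀ x y : W, ⟪S x, S y⟫ = s2 * ⟪x, y⟫ := by
    intro x y
    rw [hOinner, hScoe, hScoe, part1, hWinner]
  have hST : ∀ (x : W) (u : Wᗮ), ⟪S x, u⟫ = -⟪x, T u⟫ := by
    intro x u
    rw [hOinner, hScoe, hΦ x, hPA x]
    have h0 : ⟪((A x : W) : V), (u : V)⟫ = 0 := u.2 _ (A x).2
    have h1 : ⟪J (x : V), (u : V)⟫ = -⟪(x : V), J (u : V)⟫ := hJskew _ _
    have h2 : ⟪(x : V), J (u : V) - ((T u : W) : V)⟫ = 0 := by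
      have hm : J (u : V) - (W.orthogonalProjection (J (u : V)) : V) ∈ Wᗮ :=
        Submodule.sub_starProjection_mem_orthogonal _
      have := hm (x : V) x.2
      simpa [T] using this
    have h3 : ⟪(x : V), J (u : V)⟫ = ⟪(x : V), ((T u : W) : V)⟫ := by
      have := h2
      rw [inner_sub_right, sub_eq_zero] at this
      exact this
    rw [inner_sub_left, h0, h1, h3, hWinner]
    ring
  -- key: compute T (S x)
  have hTS : ∀ x : W, T (S x) = (-s2) • x := by
    intro x
    refine ext_inner_left ℝ ?_
    intro y
    have := hST y (S x)
    rw [hSS y x] at this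
    rw [inner_smul_right]
    have : ⟪y, T (S x)⟫ = -(s2 * ⟪y, x⟫) := by linarith [hST y (S x), hSS y x]
    rw [this]
    ring
  have goal2 : ∀ u v : Wᗮ, ⟪T u, T v⟫ = s2 * ⟪u, v⟫ := by
    by_cases hs : Real.sin θ = 0
    · have hS0 : ∀ x : W, S x = 0 := by
        intro x
        have := hSS x x
        rw [hs2, hs] at this
        simp only [zero_pow, ne_eq, OfNat.ofNat_ne_zero, not_false_eq_true, zero_mul] at this
        exact (inner_self_eq_zero (𝕜 := ℝ)).mp (by simpa using this)
      intro u v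
      have hT0 : ∀ w : Wᗮ, T w = 0 := by
        intro w
        have h := hST (T w) w
        rw [hS0] at h
        simp only [inner_zero_left] at h
        have : ⟪T w, T w⟫ = 0 := by linarith
        exact (inner_self_eq_zero (𝕜 := ℝ)).mp this
      rw [hT0 u, hT0 v, hs2, hs]
      simp
    · -- S is bijective
      have hs2ne : s2 ≠ 0 := by
        rw [hs2]; exact pow_ne_zero 2 hs
      have hSinj : Function.Injective S := by
        rw [← LinearMap.ker_eq_bot]
        rw [Submodule.eq_bot_iff]
        intro x hx
        rw [LinearMap.mem_ker] at hx
        have := hSS x x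
        rw [hx] at this
        simp only [inner_zero_left] at this
        have hxx : ⟪x, x⟫ = 0 := by
          rcases mul_eq_zero.mp this.symm with h | h
          · exact absurd h hs2ne
          · exact h
        exact (inner_self_eq_zero (𝕜 := ℝ)).mp hxx
      have hfr : Module.finrank ℝ W = Module.finrank ℝ Wᗮ := by
        have := Submodule.finrank_add_finrank_orthogonal W
        omega
      have hSsurj : Function.Surjective S :=
        (LinearMap.injective_iff_surjective_of_finrank_eq_finrank hfr).mp hSinj
      intro u v
      obtain ⟨x, hx⟩ := hSsurj u
      have h1 : T u = (-s2) • x := by rw [← hx, hTS]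
      have h2 : ⟪x, T v⟫ = -⟪u, v⟫ := by
        have := hST x v
        rw [hx] at this
        linarith
      rw [h1, inner_smul_left]
      simp only [RCLike.conj_to_real]
      rw [h2]
      ring
  intro u v
  rw [← hTcoe u, ← hTcoe v, ← hWinner, goal2, hOinner]
end

section
/- Let W ⊆ V with equal Kähler angle θ, Φ(X)=(JX)^⊥, Ξ(U)=(JU)^⊤, J_ω the partial isometry in the polar decomposition (ω|_W)^♯ = cos θ · J_ω, and J^⊥ the analogous structure on W^⊥. Away from Lagrangian directions, J^⊥ ∘ Φ = −Φ ∘ J_ω and J_ω ∘ Ξ = −Ξ ∘ J^⊥. -/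
open scoped RealInnerProductSpace

/-- Anticommutation of `Φ`, `Ξ` with the polar complex structures: for a
`2n`-dimensional subspace `W` with equal Kähler angle `θ` (with `cos θ ≠ 0`,
`cos θ < 1`), if `(ω|_W)^♯ = cos θ · J_ω` and `(ω|_{Wᗮ})^♯ = cos θ · J^⊥`,
then `J^⊥ ∘ Φ = −Φ ∘ J_ω` and `J_ω ∘ Ξ = −Ξ ∘ J^⊥`. -/
theorem polar_structures_anticommute
    (n : ℕ) (V : Type*) [NormedAddCommGroup V] [InnerProductSpace ℝ V]
    [FiniteDimensional ℝ V] (hdim : Module.finrank ℝ V = 4 * n)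
    (J : V →ₗ[ℝ] V) (hJ2 : J ∘ₗ J = -LinearMap.id)
    (hJorth : ∀ x y : V, ⟪J x, J y⟫ = ⟪x, y⟫)
    (W : Submodule ℝ V) (hW : Module.finrank ℝ W = 2 * n)
    (θ : ℝ) (hθ0 : Real.cos θ ≠ 0) (hθ1 : |Real.cos θ| < 1)
    -- polar decomposition of the skew operator of `ω|_W`
    (Jw : W →ₗ[ℝ] W) (hJw2 : Jw ∘ₗ Jw = -LinearMap.id)
    (hJworth : ∀ x y : W, ⟪Jw x, Jw y⟫ = ⟪x, y⟫)
    (hAw : ∀ x : W, (Submodule.orthogonalProjection W (J (x : V)) : W) = Real.cos θ • Jw x)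
    -- polar decomposition of the skew operator of `ω|_{Wᗮ}`
    (Jp : Wᗮ →ₗ[ℝ] Wᗮ) (hJp2 : Jp ∘ₗ Jp = -LinearMap.id)
    (hJporth : ∀ u v : Wᗮ, ⟪Jp u, Jp v⟫ = ⟪u, v⟫)
    (hAp : ∀ u : Wᗮ, (Submodule.orthogonalProjection Wᗮ (J (u : V)) : Wᗮ) = Real.cos θ • Jp u)
    (Φ : W → Wᗮ) (hΦ : ∀ x : W, Φ x = Submodule.orthogonalProjection Wᗮ (J (x : V)))
    (Ξ : Wᗮ → W) (hΞ : ∀ u : Wᗮ, Ξ u = Submodule.orthogonalProjection W (J (u : V))) :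
    (∀ x : W, Jp (Φ x) = -Φ (Jw x)) ∧
    (∀ u : Wᗮ, Jw (Ξ u) = -Ξ (Jp u)) := by
  have hJJ : ∀ v : V, J (J v) = -v := by
    intro v
    have := congrArg (fun f => f v) hJ2
    simpa using this
  constructor
  · intro x
    -- decomposition of J x
    have hdec : J (x : V) = Real.cos θ • ((Jw x : V)) + ((Φ x : Wᗮ) : V) := by
      have h := (Submodule.starProjection_add_starProjection_orthogonal (K := W) (J (x : V))).symm
      rw [Submodule.starProjection_apply, Submodule.starProjection_apply] at h
      rw [hAw x, ← hΦ x] at h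
      push_cast at h
      exact h
    have hQ : (Submodule.orthogonalProjection Wᗮ (J (J (x : V))) : Wᗮ) = 0 := by
      have : (Submodule.orthogonalProjection Wᗮ ((x : W) : V)) = 0 :=
        Submodule.orthogonalProjectionOnto_apply_of_mem_orthogonal
          (by simp [Submodule.orthogonal_orthogonal, x.2])
      rw [hJJ, map_neg, this]
      simp
    have hQ2 : (Submodule.orthogonalProjection Wᗮ (J (J (x : V))) : Wᗮ)
        = Real.cos θ • (Φ (Jw x)) + Real.cos θ • (Jp (Φ x)) := by
      rw [hdec, map_add, map_smul, map_add, map_smul]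
      rw [← hΦ (Jw x), hAp (Φ x)]
    rw [hQ] at hQ2
    have hsm : Real.cos θ • (Φ (Jw x) + Jp (Φ x)) = 0 := by
      rw [smul_add]; exact hQ2.symm
    have h0 : Φ (Jw x) + Jp (Φ x) = 0 := by
      rcases smul_eq_zero.mp hsm with h | h
      · exact absurd h hθ0
      · exact h
    exact eq_neg_of_add_eq_zero_left (by rw [add_comm]; exact h0)
  · intro u
    have hdec : J (u : V) = ((Ξ u : W) : V) + Real.cos θ • ((Jp u : V)) := by
      have h := (Submodule.starProjection_add_starProjection_orthogonal (K := W) (J (u : V))).symm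
      rw [Submodule.starProjection_apply, Submodule.starProjection_apply] at h
      rw [hAp u, ← hΞ u] at h
      push_cast at h
      exact h
    have hP : (Submodule.orthogonalProjection W (J (J (u : V))) : W) = 0 := by
      have : (Submodule.orthogonalProjection W ((u : Wᗮ) : V)) = 0 :=
        Submodule.orthogonalProjectionOnto_apply_of_mem_orthogonal u.2
      rw [hJJ, map_neg, this]
      simp
    have hP2 : (Submodule.orthogonalProjection W (J (J (u : V))) : W)
        = Real.cos θ • (Jw (Ξ u)) + Real.cos θ • (Ξ (Jp u)) := by
      rw [hdec, map_add, map_smul, map_add, map_smul]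
      rw [hAw (Ξ u), ← hΞ (Jp u)]
    rw [hP] at hP2
    have hsm : Real.cos θ • (Jw (Ξ u) + Ξ (Jp u)) = 0 := by
      rw [smul_add]; exact hP2.symm
    have h0 : Jw (Ξ u) + Ξ (Jp u) = 0 := by
      rcases smul_eq_zero.mp hsm with h | h
      · exact absurd h hθ0
      · exact h
    exact eq_neg_of_add_eq_zero_left h0
end

section
/- For any real number a and any g₀-orthogonal complex structure J_ω on ℝ^{2n}, the linear map F : ℝ^{2n} → ℝ^{2n} × ℝ^{2n}, F(X) = (X, a J_ω X), with the target carrying the complex structure J₀(X,Y) = (−Y, X) and the Euclidean metric, defines a subspace whose Kähler angles are all equal, with common cosine cos θ = 2|a| / (1 + a²). -/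
set_option maxRecDepth 4000

open scoped RealInnerProductSpace

/-- The graph `W = {(X, a J_ω X)}` in `ℂ^{2n} ≅ ℝ^{2n} × ℝ^{2n}` has equal
Kähler angles with common cosine `2|a|/(1+a²)`: the skew operator `A` of the
Kähler form `ω(u,v) = ⟪J₀ u, v⟫` restricted to `W` satisfies
`A² = −(2|a|/(1+a²))² · Id`. -/
theorem graph_of_scaled_complex_structure_equal_angles
    (n : ℕ) (a : ℝ)
    (Jw : EuclideanSpace ℝ (Fin (2 * n)) →ₗ[ℝ] EuclideanSpace ℝ (Fin (2 * n)))
    (hJw2 : Jw ∘ₗ Jw = -LinearMap.id)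
    (hJworth : ∀ x y : EuclideanSpace ℝ (Fin (2 * n)), ⟪Jw x, Jw y⟫ = ⟪x, y⟫)
    (J₀ : WithLp 2 (EuclideanSpace ℝ (Fin (2 * n)) × EuclideanSpace ℝ (Fin (2 * n))) →ₗ[ℝ]
          WithLp 2 (EuclideanSpace ℝ (Fin (2 * n)) × EuclideanSpace ℝ (Fin (2 * n))))
    (hJ₀ : ∀ X Y : EuclideanSpace ℝ (Fin (2 * n)),
        J₀ ((WithLp.equiv 2 _).symm (X, Y)) = (WithLp.equiv 2 _).symm (-Y, X))
    (F : EuclideanSpace ℝ (Fin (2 * n)) →ₗ[ℝ]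
          WithLp 2 (EuclideanSpace ℝ (Fin (2 * n)) × EuclideanSpace ℝ (Fin (2 * n))))
    (hF : ∀ X : EuclideanSpace ℝ (Fin (2 * n)),
        F X = (WithLp.equiv 2 _).symm (X, a • Jw X)) :
    ∃ A : LinearMap.range F →ₗ[ℝ] LinearMap.range F,
      (∀ x y : LinearMap.range F, ⟪A x, y⟫ = ⟪J₀ ↑x, ↑y⟫) ∧
      A ∘ₗ A = -((2 * |a| / (1 + a ^ 2)) ^ 2) • LinearMap.id := by
  have hJw2' : ∀ X, Jw (Jw X) = -X := fun X => by
    have := LinearMap.congr_fun hJw2 X; simpa using this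
  have hFinj : Function.Injective F := by
    intro X Y h
    rw [hF, hF] at h
    have := congrArg (fun z => ((WithLp.equiv 2 _) z).1) h
    simpa using this
  set e := LinearEquiv.ofInjective F hFinj with he
  have hcoe : ∀ X, ((e X : LinearMap.range F) : WithLp 2 _) = F X := fun X => rfl
  set c : ℝ := -(2 * a) / (1 + a ^ 2) with hc
  have hden : (1 + a ^ 2) ≠ 0 := by positivity
  have hA : ∀ X, (e.toLinearMap ∘ₗ (c • Jw) ∘ₗ e.symm.toLinearMap) (e X) = e (c • Jw X) := by
    intro X
    rw [LinearMap.comp_apply, LinearMap.comp_apply, LinearEquiv.coe_coe, LinearEquiv.coe_coe,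
      e.symm_apply_apply, LinearMap.smul_apply]
  refine ⟨e.toLinearMap ∘ₗ (c • Jw) ∘ₗ e.symm.toLinearMap, ?_, ?_⟩
  · intro x y
    obtain ⟨X, hX⟩ := e.surjective x
    obtain ⟨Y, hY⟩ := e.surjective y
    subst hX hY
    rw [hA, Submodule.coe_inner, hcoe, hcoe, hcoe, hF, hF, hF]
    rw [hJ₀]
    rw [WithLp.prod_inner_apply, WithLp.prod_inner_apply]
    simp only [WithLp.equiv_symm_apply, WithLp.toLp_fst, WithLp.toLp_snd]
    have h2 : ⟪X, Jw Y⟫ = -⟪Jw X, Y⟫ := by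
      have := hJworth (Jw X) Y
      rw [hJw2' X, inner_neg_left] at this
      linarith
    simp only [map_smul, hJw2' X, inner_neg_left, inner_neg_right, real_inner_smul_left,
      real_inner_smul_right, h2, smul_neg]
    rw [hc]
    field_simp
    ring
  · apply LinearMap.ext
    intro x
    obtain ⟨X, hX⟩ := e.surjective x
    subst hX
    rw [LinearMap.comp_apply, hA, hA]
    rw [map_smul, map_smul, hJw2' X, smul_neg, map_neg, map_smul, smul_neg, smul_smul,
      ← neg_smul]
    rw [LinearMap.smul_apply, LinearMap.id_apply]
    congr 1
    rw [hc]
    rw [div_pow, mul_pow, sq_abs]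
    field_simp
end
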